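/- Let N₀, P₀ ∈ ℕ and set N_{ℓ₁} = N₀·2^{ℓ₁}, P_{ℓ₂} = P₀·2^{ℓ₂} for ℓ = (ℓ₁,ℓ₂) ∈ ℕ₀². Fix L₀ ∈ ℕ₀ and for ε ∈ (0,1) set L(ε) = max(⌈log₂(ε⁻¹) + log₂ log₂(ε⁻¹)⌉ − L₀, 1), I(ε) = {ℓ ∈ ℕ₀² : ℓ₁ + ℓ₂ ≤ L(ε)}, and M_ℓ(ε) = ⌈ε⁻² N_{ℓ₁}^{-3/2} P_{ℓ₂}^{-3/2}⌉. Then the total work Cost(ε) := Σ_{ℓ ∈ I(ε)} M_ℓ(ε) · N_{ℓ₁} P_{ℓ₂} satisfies Cost(ε) ≂ ε⁻²; that is, there exist constants 0 < c ≤ C and ε₀ ∈ (0,1) such that c ε⁻² ≤ Cost(ε) ≤ C ε⁻² for all ε ∈ (0, ε₀]. -/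

import Mathlib

/-- Resolution in the timestep direction: `N_{ℓ₁} = N₀ · 2^{ℓ₁}`. -/
noncomputable def resN (N₀ : ℕ) (ℓ₁ : ℕ) : ℝ := (N₀ : ℝ) * 2 ^ ℓ₁

/-- Resolution in the ensemble-size direction: `P_{ℓ₂} = P₀ · 2^{ℓ₂}`. -/
noncomputable def resP (P₀ : ℕ) (ℓ₂ : ℕ) : ℝ := (P₀ : ℝ) * 2 ^ ℓ₂

/-- Maximal level `L(ε) = max(⌈log₂ ε⁻¹ + log₂ log₂ ε⁻¹⌉ − L₀, 1)`. -/
noncomputable def levelL (L₀ : ℕ) (ε : ℝ) : ℕ :=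
  (max (⌈Real.logb 2 ε⁻¹ + Real.logb 2 (Real.logb 2 ε⁻¹)⌉ - (L₀ : ℤ)) 1).toNat

/-- Triangular multi-index set `{ℓ ∈ ℕ₀² : ℓ₁ + ℓ₂ ≤ L}` as a finite set. -/
def idxSet (L : ℕ) : Finset (ℕ × ℕ) :=
  (Finset.range (L + 1) ×ˢ Finset.range (L + 1)).filter fun ℓ => ℓ.1 + ℓ.2 ≤ L

/-- Number of samples `M_ℓ(ε) = ⌈ε⁻² N_{ℓ₁}^{-3/2} P_{ℓ₂}^{-3/2}⌉`. -/
noncomputable def numSamples (N₀ P₀ : ℕ) (ε : ℝ) (ℓ : ℕ × ℕ) : ℕ :=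
  ⌈ε⁻¹ ^ 2 * resN N₀ ℓ.1 ^ (-(3 : ℝ) / 2) * resP P₀ ℓ.2 ^ (-(3 : ℝ) / 2)⌉₊

/-- Total work `Cost(ε) = Σ_{ℓ ∈ I(ε)} M_ℓ(ε) · N_{ℓ₁} P_{ℓ₂}`. -/
noncomputable def totalCost (N₀ P₀ L₀ : ℕ) (ε : ℝ) : ℝ :=
  ∑ ℓ ∈ idxSet (levelL L₀ ε), (numSamples N₀ P₀ ε ℓ : ℝ) * (resN N₀ ℓ.1 * resP P₀ ℓ.2)

/-! The `(0, 0)` term alone already costs `ε⁻² (N₀P₀)^{-1/2}`. Conversely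
`M_ℓ ≤ ε⁻² (N_{ℓ₁}P_{ℓ₂})^{-3/2} + 1`, so the work at level `ℓ` is at most
`ε⁻² (N_{ℓ₁}P_{ℓ₂})^{-1/2} + N_{ℓ₁}P_{ℓ₂}`. The first parts form a convergent geometric series
in `2^{-1/2}`; the rounding overhead is at most `|I(ε)| · N₀P₀ 2^L ≲ L² 2^L ≲ ε⁻¹ log³ ε⁻¹ ≲ ε⁻²`,
because `2^L ≲ ε⁻¹ log ε⁻¹` by the choice of `L(ε)`. -/

open Finset Real

lemma rpow_neg_three_halves_mul_self {y : ℝ} (hy : 0 ≤ y) :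
    y ^ (-(3 : ℝ) / 2) * y = y ^ (-(1 : ℝ) / 2) := by
  rw [← rpow_add_one' hy (by norm_num)]
  norm_num

lemma two_rpow_neg_half_le : (2 : ℝ) ^ (-(1 : ℝ) / 2) ≤ 3 / 4 := by
  have hsq : ((2 : ℝ) ^ (-(1 : ℝ) / 2)) ^ 2 = 1 / 2 := by
    rw [← rpow_mul_natCast (by norm_num)]
    norm_num
  nlinarith [rpow_nonneg (zero_le_two (α := ℝ)) (-(1 : ℝ) / 2)]

lemma sum_mul_two_pow_rpow_neg_half_le {a : ℝ} (ha : 0 ≤ a) (n : ℕ) :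
    ∑ i ∈ range n, (a * 2 ^ i) ^ (-(1 : ℝ) / 2) ≤ 4 * a ^ (-(1 : ℝ) / 2) := by
  set s : ℝ := (2 : ℝ) ^ (-(1 : ℝ) / 2)
  have hs : 0 ≤ s := rpow_nonneg zero_le_two _
  have hs34 : s ≤ 3 / 4 := two_rpow_neg_half_le
  have hgeom : ∑ i ∈ range n, s ^ i ≤ 4 := calc
    ∑ i ∈ range n, s ^ i ≤ s ^ 0 / (1 - s) := by
      rw [range_eq_Ico]
      exact geom_sum_Ico_le_of_lt_one hs (by linarith)
    _ ≤ 4 := by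
      rw [pow_zero, div_le_iff₀ (by linarith)]
      linarith
  have hterm (i : ℕ) : (a * 2 ^ i) ^ (-(1 : ℝ) / 2) = a ^ (-(1 : ℝ) / 2) * s ^ i := by
    rw [mul_rpow ha (by positivity), ← rpow_natCast_mul zero_le_two, mul_comm (i : ℝ),
      rpow_mul_natCast zero_le_two]
  simp only [hterm, ← mul_sum]
  nlinarith [rpow_nonneg ha (-(1 : ℝ) / 2)]

lemma logb_two_pow_three_le {x : ℝ} (hx : 1 ≤ x) : logb 2 x ^ 3 ≤ 216 * x := by
  have hlog : log x ≤ 3 * x ^ ((1 : ℝ) / 3) := by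
    exact (log_le_rpow_div (by linarith) (by norm_num : (0 : ℝ) < 1 / 3)).trans_eq (by ring)
  have hlogb : logb 2 x ≤ 6 * x ^ ((1 : ℝ) / 3) := by
    rw [logb, div_le_iff₀ (log_pos one_lt_two)]
    nlinarith [log_two_gt_d9, rpow_nonneg (zero_le_one.trans hx) ((1 : ℝ) / 3)]
  have hcube : (x ^ ((1 : ℝ) / 3)) ^ 3 = x := by
    rw [← rpow_mul_natCast (by linarith)]
    norm_num
  calc logb 2 x ^ 3 ≤ (6 * x ^ ((1 : ℝ) / 3)) ^ 3 :=
        pow_le_pow_left₀ (logb_nonneg one_lt_two hx) hlogb 3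
    _ = 216 * x := by rw [mul_pow, hcube]; norm_num

lemma succ_sq_mul_two_pow_le {x : ℝ} {L : ℕ} (hx : 2 ≤ x)
    (hL : (L : ℝ) < logb 2 x + logb 2 (logb 2 x) + 1) :
    ((L : ℝ) + 1) ^ 2 * 2 ^ L ≤ 10800 * x ^ 2 := by
  set lam := logb 2 x
  have hlam : 1 ≤ lam := by
    rw [le_logb_iff_rpow_le one_lt_two (by linarith), rpow_one]
    exact hx
  have hmu : 0 ≤ logb 2 lam := logb_nonneg one_lt_two hlam
  have hmu_le : logb 2 lam ≤ 2 * lam := by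
    rw [logb, div_le_iff₀ (log_pos one_lt_two)]
    nlinarith [log_le_sub_one_of_pos (zero_lt_one.trans_le hlam), log_two_gt_d9]
  have hpow : (2 : ℝ) ^ L ≤ 2 * x * lam := calc
    (2 : ℝ) ^ L = 2 ^ (L : ℝ) := (rpow_natCast 2 L).symm
    _ ≤ 2 ^ (lam + logb 2 lam + 1) := rpow_le_rpow_of_exponent_le one_le_two hL.le
    _ = 2 * x * lam := by
      rw [rpow_add two_pos, rpow_add two_pos, rpow_logb two_pos (by norm_num) (by linarith),
        rpow_logb two_pos (by norm_num) (by linarith), rpow_one]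
      ring
  have hsucc : (L : ℝ) + 1 ≤ 5 * lam := by linarith
  calc ((L : ℝ) + 1) ^ 2 * 2 ^ L ≤ (5 * lam) ^ 2 * (2 * x * lam) := by
        gcongr
    _ = 50 * x * lam ^ 3 := by ring
    _ ≤ 50 * x * (216 * x) := by
      gcongr
      exact logb_two_pow_three_le (by linarith)
    _ = 10800 * x ^ 2 := by ring

lemma levelL_lt {L₀ : ℕ} {ε : ℝ} (hε : 2 ≤ ε⁻¹) :
    (levelL L₀ ε : ℝ) < logb 2 ε⁻¹ + logb 2 (logb 2 ε⁻¹) + 1 := by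
  set t := logb 2 ε⁻¹ + logb 2 (logb 2 ε⁻¹) with ht_def
  have hlam : 1 ≤ logb 2 ε⁻¹ := by
    rw [le_logb_iff_rpow_le one_lt_two (by linarith), rpow_one]
    exact hε
  have ht : 1 ≤ t := by linarith [logb_nonneg one_lt_two hlam]
  have hceil : 1 ≤ ⌈t⌉ := Int.one_le_ceil_iff.mpr (by linarith)
  have hlevel : (levelL L₀ ε : ℤ) ≤ ⌈t⌉ := by
    rw [levelL, ← ht_def, Int.toNat_of_nonneg (by omega)]
    omega
  calc (levelL L₀ ε : ℝ) = ((levelL L₀ ε : ℤ) : ℝ) := rfl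
    _ ≤ ⌈t⌉ := by exact_mod_cast hlevel
    _ < t + 1 := Int.ceil_lt_add_one t

lemma mem_idxSet {L : ℕ} {ℓ : ℕ × ℕ} : ℓ ∈ idxSet L ↔ ℓ.1 + ℓ.2 ≤ L := by
  simp only [idxSet, mem_filter, mem_product, mem_range]
  omega

lemma card_idxSet_le (L : ℕ) : #(idxSet L) ≤ (L + 1) ^ 2 := calc
  #(idxSet L) ≤ #(range (L + 1) ×ˢ range (L + 1)) := card_filter_le _ _
  _ = (L + 1) ^ 2 := by rw [card_product, card_range, sq]

lemma sum_idxSet_mul_le {f g : ℕ → ℝ} (hf : ∀ i, 0 ≤ f i) (hg : ∀ j, 0 ≤ g j) (L : ℕ) :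
    ∑ ℓ ∈ idxSet L, f ℓ.1 * g ℓ.2 ≤ (∑ i ∈ range (L + 1), f i) * ∑ j ∈ range (L + 1), g j := by
  rw [sum_mul_sum, ← sum_product']
  exact sum_le_sum_of_subset_of_nonneg (filter_subset _ _)
    fun ℓ _ _ ↦ mul_nonneg (hf ℓ.1) (hg ℓ.2)

lemma resN_nonneg (N₀ i : ℕ) : 0 ≤ resN N₀ i := by unfold resN; positivity

lemma resP_nonneg (P₀ j : ℕ) : 0 ≤ resP P₀ j := by unfold resP; positivity

lemma resN_mul_resP_le {N₀ P₀ L : ℕ} {ℓ : ℕ × ℕ} (hℓ : ℓ.1 + ℓ.2 ≤ L) :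
    resN N₀ ℓ.1 * resP P₀ ℓ.2 ≤ N₀ * P₀ * 2 ^ L := calc
  resN N₀ ℓ.1 * resP P₀ ℓ.2 = N₀ * P₀ * 2 ^ (ℓ.1 + ℓ.2) := by rw [resN, resP, pow_add]; ring
  _ ≤ N₀ * P₀ * 2 ^ L := by gcongr; norm_num

lemma mul_rpow_neg_three_halves_mul {a b : ℝ} (ha : 0 ≤ a) (hb : 0 ≤ b) (c : ℝ) :
    c * a ^ (-(3 : ℝ) / 2) * b ^ (-(3 : ℝ) / 2) * (a * b) =
      c * (a ^ (-(1 : ℝ) / 2) * b ^ (-(1 : ℝ) / 2)) := by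
  rw [← rpow_neg_three_halves_mul_self ha, ← rpow_neg_three_halves_mul_self hb]
  ring

section Samples

variable (N₀ P₀ : ℕ) (ε : ℝ) (ℓ : ℕ × ℕ)

lemma le_numSamples_mul :
    ε⁻¹ ^ 2 * (resN N₀ ℓ.1 ^ (-(1 : ℝ) / 2) * resP P₀ ℓ.2 ^ (-(1 : ℝ) / 2)) ≤
      numSamples N₀ P₀ ε ℓ * (resN N₀ ℓ.1 * resP P₀ ℓ.2) := by
  rw [← mul_rpow_neg_three_halves_mul (resN_nonneg N₀ ℓ.1) (resP_nonneg P₀ ℓ.2)]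
  exact mul_le_mul_of_nonneg_right (Nat.le_ceil _)
    (mul_nonneg (resN_nonneg N₀ ℓ.1) (resP_nonneg P₀ ℓ.2))

lemma numSamples_mul_le :
    numSamples N₀ P₀ ε ℓ * (resN N₀ ℓ.1 * resP P₀ ℓ.2) ≤
      ε⁻¹ ^ 2 * (resN N₀ ℓ.1 ^ (-(1 : ℝ) / 2) * resP P₀ ℓ.2 ^ (-(1 : ℝ) / 2)) +
        resN N₀ ℓ.1 * resP P₀ ℓ.2 := by
  have ha := resN_nonneg N₀ ℓ.1
  have hb := resP_nonneg P₀ ℓ.2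
  rw [← mul_rpow_neg_three_halves_mul ha hb, ← add_one_mul]
  exact mul_le_mul_of_nonneg_right (Nat.ceil_lt_add_one (by positivity)).le (mul_nonneg ha hb)

end Samples

lemma le_totalCost (N₀ P₀ L₀ : ℕ) (ε : ℝ) :
    (N₀ : ℝ) ^ (-(1 : ℝ) / 2) * (P₀ : ℝ) ^ (-(1 : ℝ) / 2) * ε⁻¹ ^ 2 ≤ totalCost N₀ P₀ L₀ ε := calc
  _ = ε⁻¹ ^ 2 * (resN N₀ 0 ^ (-(1 : ℝ) / 2) * resP P₀ 0 ^ (-(1 : ℝ) / 2)) := by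
    simp only [resN, resP, pow_zero, mul_one]; ring
  _ ≤ numSamples N₀ P₀ ε (0, 0) * (resN N₀ 0 * resP P₀ 0) := le_numSamples_mul N₀ P₀ ε (0, 0)
  _ ≤ totalCost N₀ P₀ L₀ ε :=
    single_le_sum (f := fun ℓ ↦ (numSamples N₀ P₀ ε ℓ : ℝ) * (resN N₀ ℓ.1 * resP P₀ ℓ.2))
      (fun ℓ _ ↦ mul_nonneg (Nat.cast_nonneg _)
        (mul_nonneg (resN_nonneg N₀ ℓ.1) (resP_nonneg P₀ ℓ.2)))
      (mem_idxSet.mpr (Nat.zero_le _))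

lemma totalCost_le (N₀ P₀ L₀ : ℕ) {ε : ℝ} (hε : 2 ≤ ε⁻¹) :
    totalCost N₀ P₀ L₀ ε ≤
      (16 * ((N₀ : ℝ) ^ (-(1 : ℝ) / 2) * (P₀ : ℝ) ^ (-(1 : ℝ) / 2)) + 10800 * (N₀ * P₀)) *
        ε⁻¹ ^ 2 := by
  set L := levelL L₀ ε
  have hfine : ∑ ℓ ∈ idxSet L, resN N₀ ℓ.1 ^ (-(1 : ℝ) / 2) * resP P₀ ℓ.2 ^ (-(1 : ℝ) / 2) ≤
      16 * ((N₀ : ℝ) ^ (-(1 : ℝ) / 2) * (P₀ : ℝ) ^ (-(1 : ℝ) / 2)) := calc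
    _ ≤ (∑ i ∈ range (L + 1), resN N₀ i ^ (-(1 : ℝ) / 2)) *
          ∑ j ∈ range (L + 1), resP P₀ j ^ (-(1 : ℝ) / 2) :=
      sum_idxSet_mul_le (fun i ↦ rpow_nonneg (resN_nonneg N₀ i) _)
        (fun j ↦ rpow_nonneg (resP_nonneg P₀ j) _) L
    _ ≤ (4 * (N₀ : ℝ) ^ (-(1 : ℝ) / 2)) * (4 * (P₀ : ℝ) ^ (-(1 : ℝ) / 2)) :=
      mul_le_mul (sum_mul_two_pow_rpow_neg_half_le N₀.cast_nonneg _)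
        (sum_mul_two_pow_rpow_neg_half_le P₀.cast_nonneg _)
        (sum_nonneg fun j _ ↦ rpow_nonneg (resP_nonneg P₀ j) _) (by positivity)
    _ = _ := by ring
  have hcoarse : ∑ ℓ ∈ idxSet L, resN N₀ ℓ.1 * resP P₀ ℓ.2 ≤ N₀ * P₀ * (10800 * ε⁻¹ ^ 2) := calc
    _ ≤ #(idxSet L) • ((N₀ : ℝ) * P₀ * 2 ^ L) :=
      sum_le_card_nsmul _ _ _ fun ℓ hℓ ↦ resN_mul_resP_le (mem_idxSet.mp hℓ)
    _ ≤ ((L : ℝ) + 1) ^ 2 * (N₀ * P₀ * 2 ^ L) := by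
      rw [nsmul_eq_mul]
      gcongr
      exact_mod_cast card_idxSet_le L
    _ = N₀ * P₀ * (((L : ℝ) + 1) ^ 2 * 2 ^ L) := by ring
    _ ≤ N₀ * P₀ * (10800 * ε⁻¹ ^ 2) :=
      mul_le_mul_of_nonneg_left (succ_sq_mul_two_pow_le hε (levelL_lt hε)) (by positivity)
  calc totalCost N₀ P₀ L₀ ε
      ≤ ∑ ℓ ∈ idxSet L, (ε⁻¹ ^ 2 * (resN N₀ ℓ.1 ^ (-(1 : ℝ) / 2) * resP P₀ ℓ.2 ^ (-(1 : ℝ) / 2)) +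
          resN N₀ ℓ.1 * resP P₀ ℓ.2) := sum_le_sum fun ℓ _ ↦ numSamples_mul_le N₀ P₀ ε ℓ
    _ = ε⁻¹ ^ 2 * ∑ ℓ ∈ idxSet L, resN N₀ ℓ.1 ^ (-(1 : ℝ) / 2) * resP P₀ ℓ.2 ^ (-(1 : ℝ) / 2) +
          ∑ ℓ ∈ idxSet L, resN N₀ ℓ.1 * resP P₀ ℓ.2 := by rw [sum_add_distrib, mul_sum]
    _ ≤ ε⁻¹ ^ 2 * (16 * ((N₀ : ℝ) ^ (-(1 : ℝ) / 2) * (P₀ : ℝ) ^ (-(1 : ℝ) / 2))) +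
          N₀ * P₀ * (10800 * ε⁻¹ ^ 2) := by gcongr
    _ = _ := by ring

/-- Computational-cost half of the MIEnKF complexity theorem: `Cost(ε) ≂ ε⁻²`. -/
theorem mienkf_cost (N₀ P₀ : ℕ) (hN₀ : 0 < N₀) (hP₀ : 0 < P₀) (L₀ : ℕ) :
    ∃ c C : ℝ, 0 < c ∧ c ≤ C ∧ ∃ ε₀ : ℝ, 0 < ε₀ ∧ ε₀ < 1 ∧
      ∀ ε : ℝ, 0 < ε → ε ≤ ε₀ →
        c * ε⁻¹ ^ 2 ≤ totalCost N₀ P₀ L₀ ε ∧ totalCost N₀ P₀ L₀ ε ≤ C * ε⁻¹ ^ 2 := by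
  set c : ℝ := (N₀ : ℝ) ^ (-(1 : ℝ) / 2) * (P₀ : ℝ) ^ (-(1 : ℝ) / 2)
  have hc : 0 < c := by positivity
  refine ⟨c, 16 * c + 10800 * (N₀ * P₀), hc, ?_, 2⁻¹, by norm_num, by norm_num, fun ε hε hε₀ ↦ ?_⟩
  · have : (0 : ℝ) ≤ N₀ * P₀ := by positivity
    linarith
  · have hε₂ : 2 ≤ ε⁻¹ := by rwa [le_inv_comm₀ two_pos hε]
    exact ⟨le_totalCost N₀ P₀ L₀ ε, totalCost_le N₀ P₀ L₀ hε₂⟩
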